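/- arXiv:1701.02331 — 6 statements merged into one kernel-verified Lean document; each statement's English description precedes it below -/
import Mathlib

section
/- Let a,b ∈ ℕ with b ≥ 1 and let L = {(u,w) ∈ ℤ² : w ≡ a·u (mod b)}. Suppose x ∈ ℕ, x ≥ 1, and y ∈ ℤ with y ≠ 0 satisfy gcd(x,y)=1, gcd(x,b)=1, y ≡ a·x (mod b), and x² + y² < b. Then the only elements (u,w) ∈ L with u² + w² ≤ x² + y² and (u,w) ≠ (0,0) are (x,y) and (−x,−y); in particular (x,y) is, up to sign, the unique shortest nonzero vector of L. -/
/-- under the size condition `x² + y² < b`, the vector `(x,y)` is, up to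
sign, the unique shortest nonzero vector of the lattice `L_{a,b}`. -/
theorem stmt_2 (a b : ℕ) (hb : 1 ≤ b) (x : ℕ) (hx : 1 ≤ x) (y : ℤ) (hy : y ≠ 0)
    (hxy : Int.gcd (x : ℤ) y = 1) (hxb : Nat.gcd x b = 1)
    (hcong : (b : ℤ) ∣ (y - (a : ℤ) * (x : ℤ))) (hsize : (x : ℤ) ^ 2 + y ^ 2 < (b : ℤ)) :
    ∀ u w : ℤ, (b : ℤ) ∣ (w - (a : ℤ) * u) → u ^ 2 + w ^ 2 ≤ (x : ℤ) ^ 2 + y ^ 2 →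
      (u, w) ≠ (0, 0) → (u = (x : ℤ) ∧ w = y) ∨ (u = -(x : ℤ) ∧ w = -y) := by
  intro u w hdvd hle hne
  have hxpos : (0 : ℤ) < (x : ℤ) := by exact_mod_cast hx
  have hbpos : (0 : ℤ) < (b : ℤ) := by exact_mod_cast hb
  -- determinant is divisible by b
  have hd : (b : ℤ) ∣ ((x : ℤ) * w - y * u) := by
    obtain ⟨k, hk⟩ := hdvd
    obtain ⟨m, hm⟩ := hcong
    refine ⟨(x : ℤ) * k - u * m, ?_⟩
    have : (x : ℤ) * w - y * u = (x : ℤ) * (w - (a : ℤ) * u) - u * (y - (a : ℤ) * (x : ℤ)) := by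
      ring
    rw [this, hk, hm]; ring
  -- determinant has square < b²
  have hsq : ((x : ℤ) * w - y * u) ^ 2 < (b : ℤ) ^ 2 := by
    have h1 : ((x : ℤ) * w - y * u) ^ 2 + ((x : ℤ) * u + y * w) ^ 2
        = ((x : ℤ) ^ 2 + y ^ 2) * (u ^ 2 + w ^ 2) := by ring
    have h2 : (0 : ℤ) < (x : ℤ) ^ 2 + y ^ 2 := by positivity
    nlinarith [sq_nonneg ((x : ℤ) * u + y * w)]
  -- so determinant = 0
  have hzero : (x : ℤ) * w - y * u = 0 := by
    by_contra h
    have habs : (b : ℤ) ≤ |(x : ℤ) * w - y * u| :=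
      Int.le_of_dvd (abs_pos.mpr h) ((dvd_abs _ _).mpr hd)
    have := sq_abs ((x : ℤ) * w - y * u)
    nlinarith [abs_nonneg ((x : ℤ) * w - y * u)]
  have heq : (x : ℤ) * w = y * u := by linarith
  -- coprimality: x ∣ u
  have hco : IsCoprime (x : ℤ) y := Int.isCoprime_iff_gcd_eq_one.mpr hxy
  have hxu : (x : ℤ) ∣ u := by
    have : (x : ℤ) ∣ y * u := ⟨w, by linarith [heq.symm]⟩
    exact hco.dvd_of_dvd_mul_left this
  obtain ⟨t, ht⟩ := hxu
  have hw : w = y * t := by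
    have hx0 : (x : ℤ) ≠ 0 := ne_of_gt hxpos
    have : (x : ℤ) * w = (x : ℤ) * (y * t) := by rw [heq, ht]; ring
    exact mul_left_cancel₀ hx0 this
  have ht2 : t ^ 2 ≤ 1 := by
    have h2 : (0 : ℤ) < (x : ℤ) ^ 2 + y ^ 2 := by positivity
    have : t ^ 2 * ((x : ℤ) ^ 2 + y ^ 2) ≤ 1 * ((x : ℤ) ^ 2 + y ^ 2) := by
      rw [ht, hw] at hle; nlinarith
    exact le_of_mul_le_mul_right this h2
  have ht0 : t ≠ 0 := by
    intro h0
    apply hne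
    simp [ht, hw, h0]
  have hl : -1 ≤ t := by nlinarith
  have hr : t ≤ 1 := by nlinarith
  interval_cases t
  · right; constructor <;> simp [ht, hw]
  · exfalso; exact ht0 rfl
  · left; constructor <;> simp [ht, hw]
end

section
/- Let a,b ∈ ℕ with b ≥ 1 and L = {(x,y) ∈ ℤ² : y ≡ a·x (mod b)}. Any two vectors (x,y), (x',y') ∈ L with x·y' − y·x' ≠ 0 satisfy ‖(x,y)‖·‖(x',y')‖ ≥ b (Euclidean norms). In particular, L contains at most one line through the origin on which nonzero vectors of norm less than √b lie. -/
/-- two linearly independent vectors of `L_{a,b}` have product of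
Euclidean norms at least `b`. -/
theorem stmt_4 (a b : ℕ) (hb : 1 ≤ b) (x y x' y' : ℤ)
    (h1 : (b : ℤ) ∣ (y - (a : ℤ) * x)) (h2 : (b : ℤ) ∣ (y' - (a : ℤ) * x'))
    (hdet : x * y' - y * x' ≠ 0) :
    (b : ℝ) ≤ Real.sqrt ((x : ℝ) ^ 2 + (y : ℝ) ^ 2) *
      Real.sqrt ((x' : ℝ) ^ 2 + (y' : ℝ) ^ 2) := by
  have hdvd : (b : ℤ) ∣ (x * y' - y * x') := by
    obtain ⟨k, hk⟩ := h1
    obtain ⟨l, hl⟩ := h2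
    exact ⟨x * l - x' * k, by linear_combination x * hl - x' * hk⟩
  have hble : (b : ℤ) ≤ |x * y' - y * x'| :=
    Int.le_of_dvd (abs_pos.mpr hdet) ((dvd_abs _ _).mpr hdvd)
  have hR : (b : ℝ) ≤ |(x : ℝ) * y' - y * x'| := by
    have := (@Int.cast_le ℝ _ _ _).mpr hble
    push_cast at this
    simpa using this
  refine hR.trans ?_
  rw [← Real.sqrt_mul_self (abs_nonneg _), ← Real.sqrt_mul (by positivity)]
  apply Real.sqrt_le_sqrt
  nlinarith [sq_nonneg ((x : ℝ) * x' + y * y'), sq_abs ((x : ℝ) * y' - y * x')]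
end

section
/- Rational number recovery is unique: let b ∈ ℕ with b ≥ 2 and a ∈ ℤ. Suppose (x,y) and (x',y') are pairs with x,x' ∈ ℕ positive, y,y' ∈ ℤ nonzero, gcd(x,y) = gcd(x',y') = 1, gcd(x,b) = gcd(x',b) = 1, y ≡ a·x (mod b), y' ≡ a·x' (mod b), x² + y² < b, and x'² + y'² < b. Then x = x' and y = y'. -/
/-- uniqueness of rational number recovery. -/
theorem stmt_5 (b : ℕ) (hb : 2 ≤ b) (a : ℤ) (x x' : ℕ) (hx : 0 < x) (hx' : 0 < x')
    (y y' : ℤ) (hy : y ≠ 0) (hy' : y' ≠ 0)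
    (hxy : Int.gcd (x : ℤ) y = 1) (hxy' : Int.gcd (x' : ℤ) y' = 1)
    (hxb : Nat.gcd x b = 1) (hxb' : Nat.gcd x' b = 1)
    (hc : (b : ℤ) ∣ (y - a * (x : ℤ))) (hc' : (b : ℤ) ∣ (y' - a * (x' : ℤ)))
    (hs : (x : ℤ) ^ 2 + y ^ 2 < (b : ℤ)) (hs' : (x' : ℤ) ^ 2 + y' ^ 2 < (b : ℤ)) :
    x = x' ∧ y = y' := by
  set d : ℤ := (x : ℤ) * y' - (x' : ℤ) * y with hd
  have hbd : (b : ℤ) ∣ d := by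
    have : d = (x : ℤ) * (y' - a * (x' : ℤ)) - (x' : ℤ) * (y - a * (x : ℤ)) := by ring
    rw [this]
    exact dvd_sub (Dvd.dvd.mul_left hc' _) (Dvd.dvd.mul_left hc _)
  have h1 : 2 * ((x : ℤ) * |y'|) ≤ (x : ℤ) ^ 2 + y' ^ 2 := by
    nlinarith [sq_nonneg ((x : ℤ) - |y'|), sq_abs y']
  have h2 : 2 * ((x' : ℤ) * |y|) ≤ (x' : ℤ) ^ 2 + y ^ 2 := by
    nlinarith [sq_nonneg ((x' : ℤ) - |y|), sq_abs y]
  have habs : |d| < (b : ℤ) := by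
    have : |d| ≤ (x : ℤ) * |y'| + (x' : ℤ) * |y| := by
      calc |d| ≤ |(x : ℤ) * y'| + |(x' : ℤ) * y| := abs_sub _ _
        _ = (x : ℤ) * |y'| + (x' : ℤ) * |y| := by
          rw [abs_mul, abs_mul, Nat.abs_cast, Nat.abs_cast]
    linarith
  have hd0 : d = 0 := by
    rcases hbd with ⟨k, hk⟩
    rcases eq_or_ne k 0 with rfl | hk0
    · simpa using hk
    · exfalso
      have : (b : ℤ) ≤ |d| := by
        rw [hk, abs_mul]
        calc (b : ℤ) = b * 1 := by ring
          _ ≤ |(b : ℤ)| * |k| := by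
            apply mul_le_mul
            · simp
            · exact Int.one_le_abs hk0
            · norm_num
            · positivity
      linarith
  have heq : (x : ℤ) * y' = (x' : ℤ) * y := by linarith [sub_eq_zero.mp hd0]
  have hcop : IsCoprime (x : ℤ) y := Int.isCoprime_iff_gcd_eq_one.mpr hxy
  have hcop' : IsCoprime (x' : ℤ) y' := Int.isCoprime_iff_gcd_eq_one.mpr hxy'
  have hdvd1 : (x : ℤ) ∣ (x' : ℤ) := hcop.dvd_of_dvd_mul_right ⟨y', heq.symm ▸ rfl⟩
  have hdvd2 : (x' : ℤ) ∣ (x : ℤ) := hcop'.dvd_of_dvd_mul_right ⟨y, heq ▸ rfl⟩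
  have hxx : x = x' := by
    have := Int.dvd_antisymm (by positivity) (by positivity) hdvd1 hdvd2
    exact_mod_cast this
  refine ⟨hxx, ?_⟩
  subst hxx
  have hx0 : (x : ℤ) ≠ 0 := by positivity
  exact mul_left_cancel₀ hx0 heq.symm
end

section
/- Let f₁,…,f_m ∈ ℤ[X] (m ≥ 1) be polynomials whose greatest common divisor in ℤ[X] is 1. Then there exists a finite set P ⊆ ℕ such that for every b ∈ ℤ the greatest common divisor gcd(f₁(b),…,f_m(b)) lies in P. Equivalently, the set {gcd(f₁(b),…,f_m(b)) : b ∈ ℤ} is finite. -/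
/-!
Since `ℚ[X]` is a principal ideal domain, Gauss's lemma turns the hypothesis into a Bézout
identity `∑ eᵢ fᵢ = 1` in `ℚ[X]`; clearing denominators gives `∑ eᵢ fᵢ = N` with `eᵢ ∈ ℤ[X]`
and `N` a nonzero integer. Evaluating at `b` shows that `gcd(f₁(b),…,f_m(b))` divides `N`.
-/

open Polynomial IsLocalization
open scoped nonZeroDivisors

section
variable {R K : Type*} [CommRing R] [Field K] [Algebra R K] [IsFractionRing R K]

attribute [local instance] Polynomial.algebra in
theorem exists_C_mem_span_of_span_map_eq_top {ι : Type*} {f : ι → R[X]}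
    (hf : Ideal.span (Set.range fun i => (f i).map (algebraMap R K)) = ⊤) :
    ∃ c ∈ R⁰, C c ∈ Ideal.span (Set.range f) := by
  have := Polynomial.isLocalization R⁰ K
  have hone : (1 : K[X]) ∈ (Ideal.span (Set.range f)).map (algebraMap R[X] K[X]) := by
    rw [Ideal.map_span, ← Set.range_comp]
    exact hf ▸ Submodule.mem_top
  obtain ⟨⟨⟨a, ha⟩, ⟨_, c, hc, rfl⟩⟩, hca⟩ := (mem_map_algebraMap_iff (R⁰.map C) K[X]).1 hone
  rw [one_mul] at hca
  obtain rfl : C c = a := map_injective _ (IsFractionRing.injective R K) hca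
  exact ⟨c, hc, ha⟩

variable [IsDomain R] [NormalizedGCDMonoid R]

theorem map_integerNormalization_primPart_dvd (p : K[X]) :
    (integerNormalization R⁰ p).primPart.map (algebraMap R K) ∣ p := by
  obtain ⟨c, hc, hcp⟩ := integerNormalization_spec R⁰ p
  have hc0 : algebraMap R K c ≠ 0 :=
    IsFractionRing.to_map_ne_zero_of_mem_nonZeroDivisors hc
  have hdvd := map_dvd (algebraMap R K) (integerNormalization R⁰ p).primPart_dvd
  rw [hcp, ← algebraMap_smul K, smul_eq_C_mul] at hdvd
  exact (isUnit_C.2 hc0.isUnit).dvd_mul_left.1 hdvd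

theorem isUnit_of_forall_dvd_map {ι : Type*} {f : ι → R[X]}
    (hf : ∀ d : R[X], (∀ i, d ∣ f i) → IsUnit d) {p : K[X]}
    (hp : ∀ i, p ∣ (f i).map (algebraMap R K)) : IsUnit p := by
  rcases eq_or_ne p 0 with rfl | hp0
  · refine absurd (hf 0 fun i => ?_) not_isUnit_zero
    simpa [Polynomial.map_eq_zero_iff (IsFractionRing.injective R K)] using hp i
  refine isUnit_or_eq_zero_of_isUnit_integerNormalization_primPart hp0 (hf _ fun i => ?_)
  exact (isPrimitive_primPart _).dvd_of_fraction_map_dvd_fraction_map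
    ((map_integerNormalization_primPart_dvd p).trans (hp i))

theorem span_range_map_eq_top {ι : Type*} {f : ι → R[X]}
    (hf : ∀ d : R[X], (∀ i, d ∣ f i) → IsUnit d) :
    Ideal.span (Set.range fun i => (f i).map (algebraMap R K)) = ⊤ := by
  set I := Ideal.span (Set.range fun i => (f i).map (algebraMap R K))
  rw [← Ideal.span_singleton_generator I, Ideal.span_singleton_eq_top]
  refine isUnit_of_forall_dvd_map hf fun i => ?_
  rw [← Ideal.mem_span_singleton, Ideal.span_singleton_generator]
  exact Ideal.subset_span ⟨i, rfl⟩

end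

theorem exists_C_mem_span_range_of_forall_dvd_isUnit {R ι : Type*} [CommRing R] [IsDomain R]
    [NormalizedGCDMonoid R] {f : ι → R[X]} (hf : ∀ d : R[X], (∀ i, d ∣ f i) → IsUnit d) :
    ∃ c ∈ R⁰, C c ∈ Ideal.span (Set.range f) :=
  exists_C_mem_span_of_span_map_eq_top (span_range_map_eq_top (K := FractionRing R) hf)

theorem Int.natCast_gcd_natAbs_dvd_of_mem_span_range {ι : Type*} [Fintype ι] {v : ι → ℤ}
    {x : ℤ} (hx : x ∈ Ideal.span (Set.range v)) :
    ((Finset.univ.gcd fun i => (v i).natAbs : ℕ) : ℤ) ∣ x := by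
  rw [← Ideal.mem_span_singleton]
  refine Ideal.span_le.2 ?_ hx
  rintro _ ⟨i, rfl⟩
  exact Ideal.mem_span_singleton.2 (Int.natCast_dvd.2 (Finset.gcd_dvd (Finset.mem_univ i)))

theorem stmt_6_general (m : ℕ) (f : Fin m → Polynomial ℤ)
    (hgcd : ∀ d : Polynomial ℤ, (∀ i, d ∣ f i) → IsUnit d) :
    Set.Finite (Set.range fun b : ℤ =>
      Finset.univ.gcd fun i : Fin m => ((f i).eval b).natAbs) := by
  obtain ⟨N, hN, hNf⟩ := exists_C_mem_span_range_of_forall_dvd_isUnit hgcd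
  refine N.natAbs.divisors.finite_toSet.subset ?_
  rintro _ ⟨b, rfl⟩
  have hNb : N ∈ Ideal.span (Set.range fun i => (f i).eval b) := by
    simpa [Ideal.map_span, ← Set.range_comp, Function.comp_def] using
      Ideal.mem_map_of_mem (evalRingHom b) hNf
  exact Nat.mem_divisors.2 ⟨Int.natCast_dvd.1 (Int.natCast_gcd_natAbs_dvd_of_mem_span_range hNb),
    Int.natAbs_ne_zero.2 (nonZeroDivisors.ne_zero hN)⟩

/-- if `f₁,…,f_m ∈ ℤ[X]` have gcd `1`, then the set of values
`gcd(f₁(b),…,f_m(b))` for `b ∈ ℤ` is finite. -/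
theorem stmt_6 (m : ℕ) (hm : 1 ≤ m) (f : Fin m → Polynomial ℤ)
    (hgcd : ∀ d : Polynomial ℤ, (∀ i, d ∣ f i) → IsUnit d) :
    Set.Finite (Set.range fun b : ℤ =>
      Finset.univ.gcd fun i : Fin m => ((f i).eval b).natAbs) :=
  stmt_6_general m f hgcd
end

section
/- Let W be a finite Coxeter group with generating set S of simple reflections, let sgn: W → {±1} be the sign character, and let σ := (1/|S|)·Σ_{s∈S} s ∈ ℚ[W]. Then in the group algebra ℝ[W], the sequence σ^{2k} converges (as k → ∞, coefficientwise) to (1/|W₀|)·Σ_{w∈W₀} w, where W₀ = {w ∈ W : sgn(w) = 1}, and σ^{2k+1} converges to (1/|W₁|)·Σ_{w∈W₁} w, where W₁ = {w ∈ W : sgn(w) = −1}. -/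
/-!
In the basis `W` of `ℝ[W]`, left multiplication by `σ` is the transition operator
`T x (w) = |S|⁻¹ ∑ₛ x (s w)` of the random walk on `W` driven by the simple reflections. As every
`s` is an involution, `T` is a self-adjoint contraction of `ℓ²(W)`; in an orthonormal eigenbasis
`T ^ (2 k)` acts by `μ ^ (2 k)` with `|μ| ≤ 1`, so `T ^ (2 k) x` tends to the orthogonal
projection of `x` onto the fixed space of `T ^ 2`. Since `S` generates `W`, a maximum principle
shows that this fixed space is spanned by the constant vector and the sign vector `sgn`, which are
orthogonal with squared norm `|W|`. Projecting the unit vector at `1` gives `(1 + sgn) / |W|`,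
the uniform distribution on `W₀`, and one more step of the walk turns it into `(1 - sgn) / |W|`,
the uniform distribution on `W₁`.
-/

open Filter Topology Module.End

namespace LinearMap.IsSymmetric

variable {E : Type*} [NormedAddCommGroup E] [InnerProductSpace ℝ E] [FiniteDimensional ℝ E]
  {T : E →ₗ[ℝ] E} {n : ℕ}

theorem eigenvectorBasis_repr_pow_apply (hT : T.IsSymmetric) (hn : Module.finrank ℝ E = n)
    (m : ℕ) (x : E) (i : Fin n) :
    (hT.eigenvectorBasis hn).repr ((T ^ m) x) i =
      hT.eigenvalues hn i ^ m * (hT.eigenvectorBasis hn).repr x i := by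
  induction m with
  | zero => simp
  | succ m ih =>
    rw [pow_succ', Module.End.mul_apply, eigenvectorBasis_apply_self_apply, ih, pow_succ',
      mul_assoc]
    rfl

theorem abs_eigenvalues_le_one (hT : T.IsSymmetric) (hn : Module.finrank ℝ E = n)
    (hT₁ : ∀ x, ‖T x‖ ≤ ‖x‖) (i : Fin n) : |hT.eigenvalues hn i| ≤ 1 := by
  have h := hT₁ (hT.eigenvectorBasis hn i)
  rwa [apply_eigenvectorBasis, norm_smul, (hT.eigenvectorBasis hn).orthonormal.1 i, mul_one,
    Real.norm_eq_abs] at h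

theorem starProjection_eigenspace_sq_one (hT : T.IsSymmetric) (hn : Module.finrank ℝ E = n)
    (x : E) :
    (eigenspace (T ^ 2) 1).starProjection x = (hT.eigenvectorBasis hn).repr.symm
      (WithLp.toLp 2 fun i ↦
        if hT.eigenvalues hn i ^ 2 = 1 then (hT.eigenvectorBasis hn).repr x i else 0) := by
  set b := hT.eigenvectorBasis hn
  set μ := hT.eigenvalues hn
  have repr_sq (y : E) (i : Fin n) : b.repr ((T ^ 2) y) i = μ i ^ 2 * b.repr y i :=
    hT.eigenvectorBasis_repr_pow_apply hn 2 y i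
  refine Submodule.eq_starProjection_of_mem_of_inner_eq_zero ?_ fun y hy ↦ ?_
  · rw [mem_eigenspace_iff, one_smul]
    refine b.repr.injective (PiLp.ext fun i ↦ ?_)
    rw [repr_sq, LinearIsometryEquiv.apply_symm_apply]
    by_cases h : μ i ^ 2 = 1
    · simp only [h, one_mul]
    · simp only [if_neg h, mul_zero]
  · rw [mem_eigenspace_iff, one_smul] at hy
    have hy' (i : Fin n) (h : μ i ^ 2 ≠ 1) : b.repr y i = 0 := by
      by_contra hne
      have := repr_sq y i
      rw [hy] at this
      exact h ((mul_eq_right₀ hne).1 this.symm)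
    rw [← b.repr.inner_map_map, PiLp.inner_apply]
    refine Finset.sum_eq_zero fun i _ ↦ ?_
    by_cases h : μ i ^ 2 = 1
    · simp only [if_pos h, map_sub, LinearIsometryEquiv.apply_symm_apply, PiLp.sub_apply,
        sub_self]
      exact inner_zero_left _
    · rw [hy' i h]
      exact inner_zero_right _

theorem tendsto_pow_two_mul_apply (hT : T.IsSymmetric) (hT₁ : ∀ x, ‖T x‖ ≤ ‖x‖) (x : E) :
    Tendsto (fun k ↦ (T ^ (2 * k)) x) atTop
      (𝓝 ((eigenspace (T ^ 2) 1).starProjection x)) := by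
  rw [hT.starProjection_eigenspace_sq_one rfl]
  set b := hT.eigenvectorBasis rfl
  set μ := hT.eigenvalues rfl
  have hpow (k : ℕ) : (T ^ (2 * k)) x =
      b.repr.symm (WithLp.toLp 2 fun i ↦ (μ i ^ 2) ^ k * b.repr x i) := by
    rw [← b.repr.symm_apply_apply ((T ^ (2 * k)) x)]
    congr 1
    ext i
    rw [hT.eigenvectorBasis_repr_pow_apply, pow_mul]
  simp_rw [hpow]
  refine (b.repr.symm.continuous.comp (PiLp.continuous_toLp 2 _)).tendsto _ |>.comp ?_
  refine tendsto_pi_nhds.2 fun i ↦ ?_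
  by_cases h : μ i ^ 2 = 1
  · simp only [h, one_pow, one_mul, if_true]
    exact tendsto_const_nhds
  · have hμ : μ i ^ 2 < 1 :=
      ((sq_le_one_iff_abs_le_one _).mpr (hT.abs_eigenvalues_le_one rfl hT₁ i)).lt_of_ne h
    rw [if_neg h, ← zero_mul (b.repr x i)]
    exact (tendsto_pow_atTop_nhds_zero_of_lt_one (sq_nonneg _) hμ).mul_const (b.repr x i)

end LinearMap.IsSymmetric

namespace CoxeterSystem

variable {B W : Type*} [Group W] {M : CoxeterMatrix B} (cs : CoxeterSystem M W)

theorem even_length_simple_mul_iff (i : B) (w : W) :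
    Even (cs.length (cs.simple i * w)) ↔ ¬Even (cs.length w) := by
  rw [Nat.even_iff, Nat.even_iff, cs.length_mul_mod_two, cs.length_simple]
  omega

theorem neg_one_pow_length_simple_mul {R : Type*} [Ring R] (i : B) (w : W) :
    (-1 : R) ^ cs.length (cs.simple i * w) = -(-1) ^ cs.length w := by
  rw [neg_one_pow_eq_pow_mod_two, cs.length_mul_mod_two, ← neg_one_pow_eq_pow_mod_two,
    cs.length_simple, pow_add, pow_one, neg_one_mul]

theorem card_even_length_eq_card_odd [Nonempty B] :
    Nat.card {u : W // Even (cs.length u)} = Nat.card {u : W // ¬Even (cs.length u)} :=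
  Nat.card_congr <| (Equiv.mulLeft (cs.simple (Classical.arbitrary B))).subtypeEquiv
    fun _ ↦ by rw [Equiv.coe_mulLeft, cs.even_length_simple_mul_iff, not_not]

theorem two_mul_card_even_length [Finite W] [Nonempty B] :
    2 * Nat.card {u : W // Even (cs.length u)} = Nat.card W := by
  rw [two_mul]
  nth_rw 2 [cs.card_even_length_eq_card_odd]
  rw [← Nat.card_sum]
  exact Nat.card_congr (Equiv.sumCompl _)

theorem two_mul_card_odd_length [Finite W] [Nonempty B] :
    2 * Nat.card {u : W // ¬Even (cs.length u)} = Nat.card W := by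
  rw [← cs.card_even_length_eq_card_odd, cs.two_mul_card_even_length]

noncomputable def signVec : EuclideanSpace ℝ W := WithLp.toLp 2 fun w ↦ (-1) ^ cs.length w

noncomputable def evenAverage : EuclideanSpace ℝ W :=
  WithLp.toLp 2 fun w ↦
    if Even (cs.length w) then (Nat.card {u : W // Even (cs.length u)} : ℝ)⁻¹ else 0

noncomputable def oddAverage : EuclideanSpace ℝ W :=
  WithLp.toLp 2 fun w ↦
    if ¬Even (cs.length w) then (Nat.card {u : W // ¬Even (cs.length u)} : ℝ)⁻¹ else 0

theorem evenAverage_eq [Fintype W] [Nonempty B] :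
    cs.evenAverage = (Fintype.card W : ℝ)⁻¹ • (WithLp.toLp 2 1 + cs.signVec) := by
  ext w
  rw [← Nat.card_eq_fintype_card, ← cs.two_mul_card_even_length]
  rcases Nat.even_or_odd (cs.length w) with h | h
  · simp [evenAverage, signVec, h, h.neg_one_pow]
    ring
  · simp [evenAverage, signVec, Nat.not_even_iff_odd.2 h, h.neg_one_pow]

theorem oddAverage_eq [Fintype W] [Nonempty B] :
    cs.oddAverage = (Fintype.card W : ℝ)⁻¹ • (WithLp.toLp 2 1 - cs.signVec) := by
  ext w
  rw [← Nat.card_eq_fintype_card, ← cs.two_mul_card_odd_length]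
  rcases Nat.even_or_odd (cs.length w) with h | h
  · simp [oddAverage, signVec, h, h.neg_one_pow]
  · simp [oddAverage, signVec, h, h.neg_one_pow]
    ring

section

variable [Fintype W]

noncomputable def simpleShift (i : B) : EuclideanSpace ℝ W ≃ₗᵢ[ℝ] EuclideanSpace ℝ W :=
  LinearIsometryEquiv.piLpCongrLeft 2 ℝ ℝ (Equiv.mulLeft (cs.simple i))

theorem simpleShift_apply (i : B) (x : EuclideanSpace ℝ W) (w : W) :
    cs.simpleShift i x w = x (cs.simple i * w) := by
  simp [simpleShift, LinearIsometryEquiv.piLpCongrLeft_apply]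

theorem simpleShift_symm (i : B) : (cs.simpleShift i).symm = cs.simpleShift i := by
  ext x w
  simp [simpleShift, LinearIsometryEquiv.piLpCongrLeft_symm]

end

variable [Fintype B]

noncomputable def simpleAverage : MonoidAlgebra ℝ W :=
  (Fintype.card B : ℝ)⁻¹ • ∑ i, MonoidAlgebra.single (cs.simple i) 1

theorem coeff_simpleAverage_mul (f : MonoidAlgebra ℝ W) (w : W) :
    (cs.simpleAverage * f).coeff w =
      (Fintype.card B : ℝ)⁻¹ * ∑ i, f.coeff (cs.simple i * w) := by
  simp [simpleAverage, Finset.sum_mul, MonoidAlgebra.coeff_single_mul_apply]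

variable [Fintype W]

noncomputable def randomWalk : EuclideanSpace ℝ W →ₗ[ℝ] EuclideanSpace ℝ W :=
  (Fintype.card B : ℝ)⁻¹ • ∑ i, (cs.simpleShift i).toLinearMap

theorem randomWalk_apply (x : EuclideanSpace ℝ W) (w : W) :
    cs.randomWalk x w = (Fintype.card B : ℝ)⁻¹ * ∑ i, x (cs.simple i * w) := by
  simp [randomWalk, simpleShift_apply]

theorem coeff_simpleAverage_pow [DecidableEq W] (m : ℕ) (w : W) :
    (cs.simpleAverage ^ m).coeff w = (cs.randomWalk ^ m) (EuclideanSpace.single 1 1) w := by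
  induction m generalizing w with
  | zero => simp [MonoidAlgebra.one_def, Finsupp.single_apply, eq_comm]
  | succ m ih =>
    rw [pow_succ', coeff_simpleAverage_mul, pow_succ', Module.End.mul_apply, randomWalk_apply]
    simp only [ih]

theorem isSymmetric_randomWalk : cs.randomWalk.IsSymmetric := by
  refine (LinearMap.isSymmetric_sum _ fun i _ ↦ ?_).smul (star_trivial _)
  intro x y
  show inner ℝ (cs.simpleShift i x) y = inner ℝ x (cs.simpleShift i y)
  rw [LinearIsometryEquiv.inner_map_eq_flip, simpleShift_symm]

theorem norm_randomWalk_le (x : EuclideanSpace ℝ W) : ‖cs.randomWalk x‖ ≤ ‖x‖ :=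
  calc ‖cs.randomWalk x‖ = ‖(Fintype.card B : ℝ)⁻¹ • ∑ i, cs.simpleShift i x‖ := by
        simp [randomWalk]
    _ ≤ (Fintype.card B : ℝ)⁻¹ * ∑ i : B, ‖cs.simpleShift i x‖ := by
        rw [norm_smul, Real.norm_of_nonneg (by positivity)]
        gcongr
        exact norm_sum_le _ _
    _ = (Fintype.card B : ℝ)⁻¹ * Fintype.card B * ‖x‖ := by simp [mul_assoc]
    _ ≤ ‖x‖ :=
        mul_le_of_le_one_left (norm_nonneg x) (inv_mul_le_one_of_le₀ le_rfl (by positivity))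

variable [Nonempty B]

theorem randomWalk_one : cs.randomWalk (WithLp.toLp 2 1) = WithLp.toLp 2 1 := by
  ext w
  simp [randomWalk_apply]

theorem randomWalk_signVec : cs.randomWalk cs.signVec = -cs.signVec := by
  ext w
  simp [randomWalk_apply, signVec, neg_one_pow_length_simple_mul]

theorem exists_eq_smul_one_of_randomWalk_eq_self {y : EuclideanSpace ℝ W}
    (hy : cs.randomWalk y = y) : ∃ c : ℝ, y = c • WithLp.toLp 2 1 := by
  -- maximum principle: where `y` is maximal, so are all its neighbours `s * u`
  obtain ⟨w₀, -, hw₀⟩ := Finset.exists_max_image Finset.univ y Finset.univ_nonempty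
  have hmax (u : W) : y u ≤ y w₀ := hw₀ u (Finset.mem_univ u)
  have hstep (u : W) (hu : y u = y w₀) (i : B) : y (cs.simple i * u) = y w₀ := by
    have hsum : ∑ j, y (cs.simple j * u) = ∑ _j : B, y w₀ := by
      have := congrArg (· u) hy
      simp only [randomWalk_apply] at this
      field_simp at this
      simp [← hu, this]
    exact (Finset.sum_eq_sum_iff_of_le (f := fun j ↦ y (cs.simple j * u)) fun j _ ↦ hmax _).1
      hsum i (Finset.mem_univ i)
  have hall (u : W) : y (u * w₀) = y w₀ :=
    cs.simple_induction_left (p := fun u ↦ y (u * w₀) = y w₀) u (by rw [one_mul])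
      fun u i hu ↦ by rw [mul_assoc]; exact hstep _ hu i
  refine ⟨y w₀, PiLp.ext fun u ↦ ?_⟩
  simpa using hall (u * w₀⁻¹)

theorem exists_eq_smul_signVec_of_randomWalk_eq_neg {y : EuclideanSpace ℝ W}
    (hy : cs.randomWalk y = -y) : ∃ c : ℝ, y = c • cs.signVec := by
  -- twisting by the sign character turns `y` into a fixed vector
  set z : EuclideanSpace ℝ W := WithLp.toLp 2 fun w ↦ (-1) ^ cs.length w * y w
  have hz : cs.randomWalk z = z := by
    ext w
    have := congrArg (· w) hy
    simp only [randomWalk_apply, PiLp.neg_apply] at this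
    simp only [z, randomWalk_apply, neg_one_pow_length_simple_mul, neg_mul,
      Finset.sum_neg_distrib, ← Finset.mul_sum]
    linear_combination (-(-1 : ℝ) ^ cs.length w) * this
  obtain ⟨c, hc⟩ := cs.exists_eq_smul_one_of_randomWalk_eq_self hz
  refine ⟨c, PiLp.ext fun w ↦ ?_⟩
  have := congrArg (· w) hc
  simp only [z, PiLp.smul_apply, smul_eq_mul, Pi.one_apply, mul_one] at this
  simp only [signVec, PiLp.smul_apply, smul_eq_mul, ← this]
  rw [mul_right_comm, ← pow_add, Even.neg_one_pow ⟨_, rfl⟩, one_mul]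

theorem exists_eq_of_randomWalk_sq_eq_self {y : EuclideanSpace ℝ W}
    (hy : (cs.randomWalk ^ 2) y = y) :
    ∃ c d : ℝ, y = c • WithLp.toLp 2 1 + d • cs.signVec := by
  rw [sq, Module.End.mul_apply] at hy
  obtain ⟨c, hc⟩ := cs.exists_eq_smul_one_of_randomWalk_eq_self
    (y := (2 : ℝ)⁻¹ • (y + cs.randomWalk y)) (by rw [map_smul, map_add, hy, add_comm])
  obtain ⟨d, hd⟩ := cs.exists_eq_smul_signVec_of_randomWalk_eq_neg
    (y := (2 : ℝ)⁻¹ • (y - cs.randomWalk y)) (by rw [map_smul, map_sub, hy, ← smul_neg, neg_sub])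
  refine ⟨c, d, ?_⟩
  rw [← hc, ← hd]
  module

theorem inner_one_signVec : inner ℝ (WithLp.toLp 2 1 : EuclideanSpace ℝ W) cs.signVec = 0 := by
  have h := cs.isSymmetric_randomWalk (WithLp.toLp 2 1) cs.signVec
  rw [randomWalk_one, randomWalk_signVec, inner_neg_right] at h
  linarith

theorem starProjection_single_one [DecidableEq W] :
    (eigenspace (cs.randomWalk ^ 2) 1).starProjection (EuclideanSpace.single 1 1) =
      (Fintype.card W : ℝ)⁻¹ • (WithLp.toLp 2 1 + cs.signVec) := by
  refine Submodule.eq_starProjection_of_mem_of_inner_eq_zero ?_ fun y hy ↦ ?_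
  · rw [mem_eigenspace_iff, one_smul, sq, Module.End.mul_apply]
    simp only [map_smul, map_add, map_neg, randomWalk_one, randomWalk_signVec, neg_neg]
  obtain ⟨c, d, rfl⟩ := cs.exists_eq_of_randomWalk_sq_eq_self (by simpa using hy)
  have h11 :
      inner ℝ (WithLp.toLp 2 1 : EuclideanSpace ℝ W) (WithLp.toLp 2 1) = Fintype.card W := by
    rw [PiLp.inner_apply]
    simp
  have hss : inner ℝ cs.signVec cs.signVec = Fintype.card W := by
    rw [PiLp.inner_apply]
    simp [signVec]
  have hs1 : inner ℝ cs.signVec (WithLp.toLp 2 1 : EuclideanSpace ℝ W) = 0 := by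
    rw [real_inner_comm, inner_one_signVec]
  have hδ1 :
      inner ℝ (EuclideanSpace.single 1 1) (WithLp.toLp 2 1 : EuclideanSpace ℝ W) = 1 := by
    simp [EuclideanSpace.inner_single_left]
  have hδs : inner ℝ (EuclideanSpace.single 1 1) cs.signVec = 1 := by
    simp [EuclideanSpace.inner_single_left, signVec]
  have hW : (Fintype.card W : ℝ) ≠ 0 := by positivity
  simp only [inner_sub_left, inner_add_left, inner_add_right, real_inner_smul_left,
    real_inner_smul_right, h11, hss, hs1, hδ1, hδs, inner_one_signVec]
  field_simp
  ring

theorem tendsto_randomWalk_pow_two_mul [DecidableEq W] :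
    Tendsto (fun k ↦ (cs.randomWalk ^ (2 * k)) (EuclideanSpace.single 1 1)) atTop
      (𝓝 cs.evenAverage) := by
  rw [evenAverage_eq, ← starProjection_single_one]
  exact cs.isSymmetric_randomWalk.tendsto_pow_two_mul_apply cs.norm_randomWalk_le _

theorem tendsto_randomWalk_pow_two_mul_add_one [DecidableEq W] :
    Tendsto (fun k ↦ (cs.randomWalk ^ (2 * k + 1)) (EuclideanSpace.single 1 1)) atTop
      (𝓝 cs.oddAverage) := by
  have h := (cs.randomWalk.continuous_of_finiteDimensional.tendsto _).comp
    cs.tendsto_randomWalk_pow_two_mul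
  rw [evenAverage_eq, map_smul, map_add, randomWalk_one, randomWalk_signVec, ← sub_eq_add_neg,
    ← oddAverage_eq] at h
  refine h.congr fun k ↦ ?_
  rw [pow_succ', Module.End.mul_apply, Function.comp_apply]

end CoxeterSystem

/-- the even and odd powers of the averaged sum of the simple reflections
of a finite Coxeter group converge, coefficientwise in `ℝ[W]`, to the uniform averages
over the even and odd parts of `W` respectively. -/
theorem stmt_8 {B W : Type*} [Fintype B] [Nonempty B] [Group W] [Fintype W]
    {M : CoxeterMatrix B} (cs : CoxeterSystem M W)
    (σ : MonoidAlgebra ℝ W)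
    (hσ : σ = (Fintype.card B : ℝ)⁻¹ •
      ∑ i : B, MonoidAlgebra.single (cs.simple i) (1 : ℝ)) :
    ∀ w : W,
      Filter.Tendsto (fun k : ℕ => (σ ^ (2 * k)).coeff w) Filter.atTop
        (nhds (if Even (cs.length w) then
          (Nat.card {u : W // Even (cs.length u)} : ℝ)⁻¹ else 0)) ∧
      Filter.Tendsto (fun k : ℕ => (σ ^ (2 * k + 1)).coeff w) Filter.atTop
        (nhds (if ¬ Even (cs.length w) then
          (Nat.card {u : W // ¬ Even (cs.length u)} : ℝ)⁻¹ else 0)) := by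
  classical
  obtain rfl : σ = cs.simpleAverage := hσ
  intro w
  simp only [cs.coeff_simpleAverage_pow]
  exact ⟨((PiLp.continuous_apply 2 _ w).tendsto _).comp cs.tendsto_randomWalk_pow_two_mul,
    ((PiLp.continuous_apply 2 _ w).tendsto _).comp cs.tendsto_randomWalk_pow_two_mul_add_one⟩
end

section
/- Let A ∈ ℤ[X]^{n×n} with det(A) ≠ 0 in ℚ(X), and write A^{-1} = (1/c)·B with B ∈ ℤ[X]^{n×n}, c ∈ ℤ[X], and gcd(B,c) = 1 (overall gcd of c and all entries of B in ℤ[X]). For a prime p ∈ ℤ, the reduction of A modulo p is invertible over the rational function field 𝔽_p(X) if and only if p does not divide the content gcd(c) ∈ ℤ of c. -/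
/-- with `A⁻¹ = (1/c)·B` over `ℤ[X]` and `gcd(B,c) = 1`, the reduction of
`A` mod a prime `p` is invertible over `𝔽_p(X)` iff `p` does not divide the content of `c`. -/
theorem stmt_14 (n : ℕ) (A B : Matrix (Fin n) (Fin n) (Polynomial ℤ)) (hdet : A.det ≠ 0)
    (c : Polynomial ℤ) (hc : c ≠ 0)
    (hinv : B * A = c • (1 : Matrix (Fin n) (Fin n) (Polynomial ℤ)))
    (hgcd : ∀ d : Polynomial ℤ, d ∣ c → (∀ i j, d ∣ B i j) → IsUnit d)
    (p : ℕ) [Fact p.Prime] :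
    (A.map (Polynomial.map (Int.castRingHom (ZMod p)))).det ≠ 0 ↔
      ¬ (p : ℤ) ∣ c.content := by
  set f := Int.castRingHom (ZMod p) with hf
  have hp : Prime (p : ℤ) := Nat.prime_iff_prime_int.mp Fact.out
  -- p ∣ content c ↔ reduction of c is 0
  have hkey : (p : ℤ) ∣ c.content ↔ c.map f = 0 := by
    rw [Polynomial.dvd_content_iff_C_dvd, Polynomial.C_dvd_iff_dvd_coeff]
    constructor
    · intro h
      ext k
      simp only [Polynomial.coeff_map, Polynomial.coeff_zero, hf, Int.coe_castRingHom,
        ZMod.intCast_zmod_eq_zero_iff_dvd]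
      exact h k
    · intro h k
      have := congrArg (fun q => Polynomial.coeff q k) h
      simpa [hf, ZMod.intCast_zmod_eq_zero_iff_dvd] using this
  -- reduced equation
  have hinv' : (B.map (Polynomial.map f)) * (A.map (Polynomial.map f)) =
      (c.map f) • (1 : Matrix (Fin n) (Fin n) (Polynomial (ZMod p))) := by
    have := congrArg ((Polynomial.mapRingHom f).mapMatrix) hinv
    simp only [map_mul, RingHom.mapMatrix_apply, Polynomial.coe_mapRingHom] at this
    rw [this]
    ext i j
    simp [Matrix.smul_apply, Matrix.one_apply, apply_ite]
  constructor
  · intro hA hcontent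
    have hc0 : c.map f = 0 := hkey.1 hcontent
    rw [hc0, zero_smul] at hinv'
    have hB0 : ∀ i j, (B.map (Polynomial.map f)) i j = 0 := by
      have h2 : (B.map (Polynomial.map f)) * ((A.map (Polynomial.map f)) *
          (A.map (Polynomial.map f)).adjugate) = 0 := by
        rw [← mul_assoc, hinv', zero_mul]
      rw [Matrix.mul_adjugate] at h2
      intro i j
      have h3 := congrFun (congrFun h2 i) j
      simp only [Matrix.mul_smul, Matrix.mul_one, Matrix.smul_apply,
        Matrix.zero_apply, smul_eq_mul] at h3
      exact (mul_eq_zero.1 h3).resolve_left hA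
    have hdvd : ∀ i j, Polynomial.C (p : ℤ) ∣ B i j := by
      intro i j
      rw [Polynomial.C_dvd_iff_dvd_coeff]
      intro k
      have := congrArg (fun q => Polynomial.coeff q k) (hB0 i j)
      simpa [Matrix.map_apply, hf, ZMod.intCast_zmod_eq_zero_iff_dvd] using this
    have hdvdc : Polynomial.C (p : ℤ) ∣ c :=
      Polynomial.dvd_content_iff_C_dvd.1 hcontent
    have := hgcd _ hdvdc hdvd
    rw [Polynomial.isUnit_C] at this
    exact hp.not_unit this
  · intro hcontent hdetA
    have hc0 : c.map f ≠ 0 := fun h => hcontent (hkey.2 h)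
    have hdet' := congrArg Matrix.det hinv'
    rw [Matrix.det_mul, hdetA, mul_zero, Matrix.det_smul, Matrix.det_one, mul_one,
      Fintype.card_fin] at hdet'
    rcases Nat.eq_zero_or_pos n with hn | hn
    · subst hn
      rw [Matrix.det_isEmpty] at hdetA
      exact one_ne_zero hdetA
    · exact hc0 (pow_eq_zero_iff hn.ne' |>.1 hdet'.symm)
end
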